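/- Let G be a connected k-uniform hypergraph on n vertices with degree sequence d₁ ≥ … ≥ d_n and d* as in the previous statement (d* = 1 when d₁ = d₂). Then μ(G) = d₁ + d₁(1/d*)^{k−1} if and only if G is regular or G is the blow-up H¹ of a regular (k−1)-uniform hypergraph H on n−1 vertices (the blow-up H¹ is obtained by adding one new common vertex to every edge of H). -/

import Mathlib

/-- The spectral radius of an order-`k` tensor of dimension `n`: the largest modulus of its
(complex) eigenvalues, where `ρ` is an eigenvalue if `T x = ρ x^{[k-1]}` for some `x ≠ 0`. -/
noncomputable def specRad (n k : ℕ) (T : Fin n → (Fin (k-1) → Fin n) → ℝ) : ℝ :=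
  sSup {r : ℝ | ∃ ρ : ℂ, ‖ρ‖ = r ∧ ∃ x : Fin n → ℂ, x ≠ 0 ∧
    ∀ i, (∑ f : Fin (k-1) → Fin n, (T i f : ℂ) * ∏ a, x (f a)) = ρ * x i ^ (k-1)}

/-- A hypergraph on vertex set `Fin n` is a finite set of edges; `hDeg` is the degree of
vertex `i`, the number of edges containing `i`. -/
def hDeg (n : ℕ) (E : Finset (Finset (Fin n))) (i : Fin n) : ℕ :=
  (E.filter (fun e => i ∈ e)).card

/-- The average 2-degree of vertex `i` in a `k`-uniform hypergraph:
`m_i = (Σ_{{i,i₂,…,i_k} ∈ E_i} d_{i₂} ⋯ d_{i_k}) / d_i^{k-1}`. -/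
noncomputable def avg2 (n k : ℕ) (E : Finset (Finset (Fin n))) (i : Fin n) : ℝ :=
  (∑ e ∈ E.filter (fun e => i ∈ e), ∏ j ∈ e.erase i, (hDeg n E j : ℝ)) /
    (hDeg n E i : ℝ) ^ (k-1)

/-- The adjacency tensor of a `k`-uniform hypergraph: entry `1/(k-1)!` at `(i₁,…,i_k)` when
`{i₁,…,i_k}` is an edge, and `0` otherwise. -/
noncomputable def adjT (n k : ℕ) (E : Finset (Finset (Fin n))) :
    Fin n → (Fin (k-1) → Fin n) → ℝ :=
  fun i f => if insert i (Finset.image f Finset.univ) ∈ E then 1 / (k-1).factorial else 0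

/-- The signless Laplacian tensor `Q(G) = D(G) + A(G)`. -/
noncomputable def qT (n k : ℕ) (E : Finset (Finset (Fin n))) :
    Fin n → (Fin (k-1) → Fin n) → ℝ :=
  fun i f => (if ∀ a, f a = i then (hDeg n E i : ℝ) else 0) + adjT n k E i f

/-- A hypergraph is connected if every pair of distinct vertices is joined by a sequence of
pairwise intersecting edges. -/
def HConn (n : ℕ) (E : Finset (Finset (Fin n))) : Prop :=
  ∀ u v : Fin n, u ≠ v → ∃ r : ℕ, ∃ es : Fin (r+1) → Finset (Fin n),
    (∀ s, es s ∈ E) ∧ u ∈ es 0 ∧ v ∈ es (Fin.last r) ∧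
    ∀ s : Fin r, (es s.castSucc ∩ es s.succ).Nonempty

/-!
Let `v₀` be a vertex of maximum degree `d₁` and `d₂` the second largest degree. Test the
signless Laplacian tensor against the positive vector `y` with `y v₀ = d*` and `y = 1`
elsewhere. The defining equation of `d*` says exactly that `μ₀ = d₁ + d₁ (1/d*)^{k-1}` equals
`d₂ (1 + d*)` and that the row of `Q y^{k-1} = μ₀ y^{[k-1]}` at `v₀` holds with equality; every
other row holds as an inequality, since its edges contribute at most `d*` each. By the
Collatz–Wielandt bound `μ(G) ≤ μ₀`. For a connected hypergraph, an eigenvalue of modulus `μ₀`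
forces equality in every row, and conversely equality in every row makes `μ₀` an eigenvalue.
Equality in the row of `i ≠ v₀` means `d_i = d₂` and, when `d* > 1` (i.e. `d₁ > d₂`), that every
edge through `i` contains `v₀`: the hypergraph is regular, or a blow-up with apex `v₀`.
-/

open Finset Function

section Enumeration

variable {α : Type*} [DecidableEq α] {m : ℕ} {t : Finset α}

lemma injective_of_image_univ_eq {f : Fin m → α} (hf : image f univ = t) (ht : #t = m) :
    Injective f := by
  have hinj : Set.InjOn f (univ : Finset (Fin m)) := card_image_iff.mp (by simp [hf, ht])
  exact fun a b hab => hinj (mem_univ a) (mem_univ b) hab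

lemma prod_comp_eq_of_image_univ_eq {R : Type*} [CommMonoid R] {f : Fin m → α}
    (hf : image f univ = t) (ht : #t = m) (y : α → R) : ∏ a, y (f a) = ∏ j ∈ t, y j := by
  rw [← hf, prod_image fun a _ b _ hab => injective_of_image_univ_eq hf ht hab]

noncomputable def equivOfImageUnivEq (ht : #t = m) :
    {f : Fin m → α // image f univ = t} ≃ (Fin m ≃ t) where
  toFun f := .ofBijective (fun a => ⟨f.1 a, f.2.subset (mem_image_of_mem _ (mem_univ a))⟩) <| by
    refine (Fintype.bijective_iff_injective_and_card _).mpr ⟨fun a b hab => ?_, by simp [ht]⟩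
    exact injective_of_image_univ_eq f.2 ht (congrArg Subtype.val hab)
  invFun σ := ⟨fun a => σ a, by
    ext j
    simp only [mem_image, mem_univ, true_and]
    exact ⟨fun ⟨a, ha⟩ => ha ▸ (σ a).2, fun hj => ⟨σ.symm ⟨j, hj⟩, by simp⟩⟩⟩
  left_inv f := rfl
  right_inv σ := by ext; rfl

lemma card_filter_image_univ_eq [Fintype α] (ht : #t = m) :
    #{f : Fin m → α | image f univ = t} = m.factorial := by
  rw [← Fintype.card_subtype, Fintype.card_congr (equivOfImageUnivEq ht),
    Fintype.card_equiv ((t.equivFinOfCardEq ht).symm), Fintype.card_fin]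

lemma sum_filter_image_univ_eq_prod [Fintype α] {R : Type*} [CommSemiring R] (ht : #t = m)
    (y : α → R) :
    ∑ f : Fin m → α with image f univ = t, ∏ a, y (f a) = m.factorial * ∏ j ∈ t, y j := by
  rw [sum_congr rfl fun f hf => prod_comp_eq_of_image_univ_eq (mem_filter.mp hf).2 ht y,
    sum_const, card_filter_image_univ_eq ht, nsmul_eq_mul]

end Enumeration

section Contraction

variable {n k : ℕ} {E : Finset (Finset (Fin n))}

lemma insert_image_univ_eq_iff (hcard : ∀ e ∈ E, #e = k) {i : Fin n} {e : Finset (Fin n)}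
    (he : e ∈ E) (hie : i ∈ e) (f : Fin (k-1) → Fin n) :
    insert i (image f univ) = e ↔ image f univ = e.erase i := by
  refine ⟨fun h => ?_, fun h => by rw [h, insert_erase hie]⟩
  have hsub : e.erase i ⊆ image f univ := fun j hj =>
    (mem_insert.mp (h ▸ erase_subset i e hj)).resolve_left (ne_of_mem_erase hj)
  refine (eq_of_subset_of_card_le hsub (card_image_le.trans ?_)).symm
  simp [card_erase_of_mem hie, hcard e he]

lemma sum_adjT_mul_prod (hcard : ∀ e ∈ E, #e = k) (y : Fin n → ℝ) (i : Fin n) :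
    ∑ f, adjT n k E i f * ∏ a, y (f a) = ∑ e ∈ E with i ∈ e, ∏ j ∈ e.erase i, y j := by
  have hadj : ∀ f : Fin (k-1) → Fin n, adjT n k E i f =
      ∑ e ∈ E with i ∈ e, if image f univ = e.erase i then ((k-1).factorial : ℝ)⁻¹ else 0 := by
    intro f
    rw [sum_congr rfl fun e he => if_congr (insert_image_univ_eq_iff hcard
      (mem_filter.mp he).1 (mem_filter.mp he).2 f).symm rfl rfl, sum_ite_eq]
    simp [adjT]
  simp_rw [hadj, sum_mul, ite_mul, zero_mul]
  rw [sum_comm]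
  refine sum_congr rfl fun e he => ?_
  obtain ⟨heE, hie⟩ := mem_filter.mp he
  rw [← sum_filter, ← mul_sum, sum_filter_image_univ_eq_prod (by
    rw [card_erase_of_mem hie, hcard e heE]), inv_mul_cancel_left₀ (by positivity)]

lemma sum_qT_mul_prod (hcard : ∀ e ∈ E, #e = k) (y : Fin n → ℝ) (i : Fin n) :
    ∑ f, qT n k E i f * ∏ a, y (f a) =
      hDeg n E i * y i ^ (k-1) + ∑ e ∈ E with i ∈ e, ∏ j ∈ e.erase i, y j := by
  simp only [qT, add_mul, sum_add_distrib, sum_adjT_mul_prod hcard, ite_mul, zero_mul]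
  congr 1
  have hconst : ∀ f : Fin (k-1) → Fin n, (∀ a, f a = i) ↔ f = fun _ => i :=
    fun f => funext_iff.symm
  simp [hconst]

lemma qT_nonneg (E : Finset (Finset (Fin n))) : 0 ≤ qT n k E := fun i f => by
  unfold qT adjT
  positivity

end Contraction

section NonnegTensor

variable {n k : ℕ} {T : Fin n → (Fin (k-1) → Fin n) → ℝ}

def IsEigenpair (n k : ℕ) (T : Fin n → (Fin (k-1) → Fin n) → ℝ) (ρ : ℂ) (x : Fin n → ℂ) :
    Prop :=
  x ≠ 0 ∧ ∀ i, ∑ f : Fin (k-1) → Fin n, (T i f : ℂ) * ∏ a, x (f a) = ρ * x i ^ (k-1)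

def eigenvalueNorms (n k : ℕ) (T : Fin n → (Fin (k-1) → Fin n) → ℝ) : Set ℝ :=
  {r | ∃ ρ : ℂ, ‖ρ‖ = r ∧ ∃ x, IsEigenpair n k T ρ x}

lemma specRad_eq_sSup_eigenvalueNorms (T : Fin n → (Fin (k-1) → Fin n) → ℝ) :
    specRad n k T = sSup (eigenvalueNorms n k T) := rfl

lemma IsEigenpair.smul {ρ : ℂ} {x : Fin n → ℂ} (h : IsEigenpair n k T ρ x) {c : ℂ}
    (hc : c ≠ 0) : IsEigenpair n k T ρ (c • x) := by
  refine ⟨smul_ne_zero hc h.1, fun i => ?_⟩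
  simp only [Pi.smul_apply, smul_eq_mul, prod_mul_distrib, Fin.prod_const, mul_pow]
  rw [mul_left_comm, ← h.2 i, mul_sum]
  exact sum_congr rfl fun f _ => by ring

lemma IsEigenpair.norm_mul_pow_le (hT : 0 ≤ T) {ρ : ℂ} {x : Fin n → ℂ}
    (h : IsEigenpair n k T ρ x) (i : Fin n) :
    ‖ρ‖ * ‖x i‖ ^ (k-1) ≤ ∑ f, T i f * ∏ a, ‖x (f a)‖ := by
  rw [← norm_pow, ← norm_mul, ← h.2 i]
  refine (norm_sum_le _ _).trans_eq (sum_congr rfl fun f _ => ?_)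
  rw [norm_mul, norm_prod, Complex.norm_real, Real.norm_of_nonneg (hT i f)]

lemma sum_mul_prod_le_of_le (hT : 0 ≤ T) {u v : Fin n → ℝ} {M : ℝ} (hu : 0 ≤ u)
    (huv : ∀ j, u j ≤ M * v j) (i : Fin n) :
    ∑ f, T i f * ∏ a, u (f a) ≤ M ^ (k-1) * ∑ f, T i f * ∏ a, v (f a) := by
  rw [mul_sum]
  refine sum_le_sum fun f _ => ?_
  calc T i f * ∏ a, u (f a) ≤ T i f * ∏ a, (M * v (f a)) :=
        mul_le_mul_of_nonneg_left (prod_le_prod (fun a _ => hu _) fun a _ => huv _) (hT i f)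
    _ = M ^ (k-1) * (T i f * ∏ a, v (f a)) := by
        rw [prod_mul_distrib, Fin.prod_const]; ring

lemma eq_of_sum_mul_prod_eq (hT : 0 ≤ T) {u v : Fin n → ℝ} {M : ℝ} (hu : 0 ≤ u)
    (hv : ∀ j, 0 < v j) (hM : 0 < M) (huv : ∀ j, u j ≤ M * v j) {i : Fin n}
    (heq : ∑ f, T i f * ∏ a, u (f a) = M ^ (k-1) * ∑ f, T i f * ∏ a, v (f a))
    {f : Fin (k-1) → Fin n} (hf : T i f ≠ 0) (a : Fin (k-1)) : u (f a) = M * v (f a) := by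
  have hprod_le : ∀ g ∈ (univ : Finset (Fin (k-1) → Fin n)),
      T i g * ∏ b, u (g b) ≤ T i g * ∏ b, (M * v (g b)) := fun g _ =>
    mul_le_mul_of_nonneg_left (prod_le_prod (fun b _ => hu _) fun b _ => huv _) (hT i g)
  have hsum : ∑ g, T i g * ∏ b, u (g b) = ∑ g, T i g * ∏ b, (M * v (g b)) := by
    rw [heq, mul_sum]
    refine sum_congr rfl fun g _ => ?_
    rw [prod_mul_distrib, Fin.prod_const]; ring
  have hprod : ∏ b, u (f b) = ∏ b, (M * v (f b)) :=
    mul_left_cancel₀ hf ((sum_eq_sum_iff_of_le hprod_le).mp hsum f (mem_univ f))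
  have hpos : ∀ b ∈ (univ : Finset (Fin (k-1))), 0 < u (f b) := fun b _ =>
    (hu _).lt_of_ne' (prod_ne_zero_iff.mp (hprod ▸ (prod_pos fun b _ => mul_pos hM (hv _)).ne') b
      (mem_univ b))
  by_contra hne
  exact (prod_lt_prod hpos (fun b _ => huv _) ⟨a, mem_univ a, (huv _).lt_of_ne hne⟩).ne hprod

lemma exists_max_norm_div {x : Fin n → ℂ} (hx : x ≠ 0) {y : Fin n → ℝ} (hy : ∀ j, 0 < y j) :
    ∃ M > 0, (∀ j, ‖x j‖ ≤ M * y j) ∧ ∃ i, ‖x i‖ = M * y i := by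
  obtain ⟨j, hj⟩ := Function.ne_iff.mp hx
  obtain ⟨i, -, hmax⟩ := exists_max_image univ (fun j => ‖x j‖ / y j) ⟨j, mem_univ j⟩
  refine ⟨‖x i‖ / y i, (div_pos (norm_pos_iff.mpr hj) (hy j)).trans_le (hmax j (mem_univ j)),
    fun j => (div_le_iff₀ (hy j)).mp (hmax j (mem_univ j)), i, ?_⟩
  rw [div_mul_cancel₀ _ (hy i).ne']

lemma IsEigenpair.norm_le (hT : 0 ≤ T) {y : Fin n → ℝ} (hy : ∀ j, 0 < y j) {R : ℝ}
    (hR : ∀ i, ∑ f, T i f * ∏ a, y (f a) ≤ R * y i ^ (k-1)) {ρ : ℂ} {x : Fin n → ℂ}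
    (h : IsEigenpair n k T ρ x) : ‖ρ‖ ≤ R := by
  obtain ⟨M, hM, hxM, i, hi⟩ := exists_max_norm_div h.1 hy
  have hpos : 0 < (M * y i) ^ (k-1) := pow_pos (mul_pos hM (hy i)) _
  refine le_of_mul_le_mul_right ?_ hpos
  calc ‖ρ‖ * (M * y i) ^ (k-1) ≤ ∑ f, T i f * ∏ a, ‖x (f a)‖ := hi ▸ h.norm_mul_pow_le hT i
    _ ≤ M ^ (k-1) * ∑ f, T i f * ∏ a, y (f a) :=
        sum_mul_prod_le_of_le hT (fun _ => norm_nonneg _) hxM i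
    _ ≤ M ^ (k-1) * (R * y i ^ (k-1)) := by gcongr; exact hR i
    _ = R * (M * y i) ^ (k-1) := by ring

lemma IsEigenpair.sum_eq_of_norm_eq (hT : 0 ≤ T) {y : Fin n → ℝ} (hy : ∀ j, 0 < y j) {R : ℝ}
    (hR : ∀ i, ∑ f, T i f * ∏ a, y (f a) ≤ R * y i ^ (k-1)) {ρ : ℂ} {x : Fin n → ℂ}
    (h : IsEigenpair n k T ρ x) (hρ : ‖ρ‖ = R) {M : ℝ} (hM : 0 < M)
    (hxM : ∀ j, ‖x j‖ ≤ M * y j) {i : Fin n} (hi : ‖x i‖ = M * y i) :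
    ∑ f, T i f * ∏ a, y (f a) = R * y i ^ (k-1) ∧
      ∀ f, T i f ≠ 0 → ∀ a, ‖x (f a)‖ = M * y (f a) := by
  have hlower := h.norm_mul_pow_le hT i
  have hmid := sum_mul_prod_le_of_le hT (fun _ => norm_nonneg _) hxM i
  have hupper := mul_le_mul_of_nonneg_left (hR i) (pow_nonneg hM.le (k-1))
  rw [hρ, hi, mul_pow] at hlower
  refine ⟨le_antisymm (hR i) (le_of_mul_le_mul_left (by linarith) (pow_pos hM (k-1))),
    fun f hf => eq_of_sum_mul_prod_eq hT (fun _ => norm_nonneg _) hy hM hxM (by linarith) hf⟩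

lemma isEigenpair_ofReal {y : Fin n → ℝ} (hy : y ≠ 0) {R : ℝ}
    (h : ∀ i, ∑ f, T i f * ∏ a, y (f a) = R * y i ^ (k-1)) :
    IsEigenpair n k T R (fun j => y j) := by
  refine ⟨fun h0 => hy (funext fun j => by simpa using congrFun h0 j), fun i => ?_⟩
  beta_reduce
  exact_mod_cast h i

lemma specRad_eq_of_sum_eq (hn : 0 < n) (hT : 0 ≤ T) {y : Fin n → ℝ} (hy : ∀ j, 0 < y j)
    {R : ℝ} (hR : 0 ≤ R)
    (h : ∀ i, ∑ f, T i f * ∏ a, y (f a) = R * y i ^ (k-1)) : specRad n k T = R := by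
  have hy0 : y ≠ 0 := fun h0 => (hy ⟨0, hn⟩).ne' (congrFun h0 _)
  have hmem : R ∈ eigenvalueNorms n k T :=
    ⟨R, by simp [abs_of_nonneg hR], _, isEigenpair_ofReal hy0 h⟩
  have hub : ∀ r ∈ eigenvalueNorms n k T, r ≤ R := by
    rintro r ⟨ρ, rfl, x, hx⟩
    exact hx.norm_le hT hy fun i => (h i).le
  exact le_antisymm (csSup_le ⟨R, hmem⟩ hub) (le_csSup ⟨R, hub⟩ hmem)

lemma IsEigenpair.norm_le_sum (hT : 0 ≤ T) {ρ : ℂ} {x : Fin n → ℂ} (h : IsEigenpair n k T ρ x) :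
    ‖ρ‖ ≤ ∑ i, ∑ f, T i f := by
  refine h.norm_le hT (y := 1) (fun _ => one_pos) fun i => ?_
  simpa using single_le_sum (f := fun i => ∑ f, T i f)
    (fun i _ => sum_nonneg fun f _ => hT i f) (mem_univ i)

lemma isCompact_eigenvalueNorms (hT : 0 ≤ T) : IsCompact (eigenvalueNorms n k T) := by
  set K : Set (ℂ × (Fin n → ℂ)) := {p | ‖p.2‖ = 1} ∩
    ⋂ i, {p | ∑ f : Fin (k-1) → Fin n, (T i f : ℂ) * ∏ a, p.2 (f a) = p.1 * p.2 i ^ (k-1)}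
  have hK : IsCompact K := by
    refine .of_isClosed_subset ((isCompact_closedBall 0 (∑ i, ∑ f, T i f)).prod
      (isCompact_closedBall 0 1)) ?_ fun p hp => ?_
    · refine (isClosed_eq (by fun_prop) continuous_const).inter (isClosed_iInter fun i => ?_)
      exact isClosed_eq (by fun_prop) (by fun_prop)
    · have hp' : IsEigenpair n k T p.1 p.2 :=
        ⟨norm_ne_zero_iff.mp (hp.1 ▸ one_ne_zero), Set.mem_iInter.mp hp.2⟩
      exact ⟨mem_closedBall_zero_iff.mpr (hp'.norm_le_sum hT),
        mem_closedBall_zero_iff.mpr hp.1.le⟩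
  have himage : eigenvalueNorms n k T = (fun p => ‖p.1‖) '' K := by
    ext r
    refine ⟨?_, ?_⟩
    · rintro ⟨ρ, rfl, x, hx⟩
      have hx0 : ‖x‖ ≠ 0 := norm_ne_zero_iff.mpr hx.1
      refine ⟨(ρ, ((‖x‖⁻¹ : ℝ) : ℂ) • x), ⟨?_, Set.mem_iInter.mpr ?_⟩, rfl⟩
      · simp [norm_smul, hx0]
      · exact (hx.smul (by simpa using hx0)).2
    · rintro ⟨p, hp, rfl⟩
      exact ⟨p.1, rfl, p.2, norm_ne_zero_iff.mp (hp.1 ▸ one_ne_zero), Set.mem_iInter.mp hp.2⟩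
  rw [himage]
  exact hK.image (by fun_prop)

lemma exists_isEigenpair_norm_eq_specRad (hT : 0 ≤ T) (h : 0 < specRad n k T) :
    ∃ ρ x, IsEigenpair n k T ρ x ∧ ‖ρ‖ = specRad n k T := by
  have hne : (eigenvalueNorms n k T).Nonempty := by
    by_contra hempty
    rw [specRad_eq_sSup_eigenvalueNorms, Set.not_nonempty_iff_eq_empty.mp hempty,
      Real.sSup_empty] at h
    exact h.false
  obtain ⟨ρ, hρ, x, hx⟩ := (isCompact_eigenvalueNorms hT).sSup_mem hne
  exact ⟨ρ, x, hx, hρ⟩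

end NonnegTensor

section Hypergraph

variable {n k : ℕ} {E : Finset (Finset (Fin n))}

lemma HConn.forall_of_mem_edge (hconn : HConn n E) {P : Fin n → Prop} {u : Fin n} (hu : P u)
    (hP : ∀ e ∈ E, ∀ i ∈ e, P i → ∀ j ∈ e, P j) (v : Fin n) : P v := by
  by_cases hv : v = u
  · exact hv ▸ hu
  obtain ⟨r, es, hes, hues, hves, hinter⟩ := hconn u v (Ne.symm hv)
  have hchain : ∀ s, ∀ j ∈ es s, P j := by
    refine Fin.induction (hP _ (hes 0) u hues hu) fun s ih => ?_
    obtain ⟨w, hw⟩ := hinter s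
    exact hP _ (hes _) w (mem_inter.mp hw).2 (ih w (mem_inter.mp hw).1)
  exact hchain _ v hves

lemma HConn.hDeg_pos (hconn : HConn n E) (hn : 1 < n) (i : Fin n) : 0 < hDeg n E i := by
  obtain ⟨j, hj⟩ : ∃ j : Fin n, i ≠ j := by
    by_cases hi : i = ⟨0, by omega⟩
    · exact ⟨⟨1, hn⟩, by simp [hi, Fin.ext_iff]⟩
    · exact ⟨_, hi⟩
  obtain ⟨r, es, hes, hies, -⟩ := hconn i j hj
  exact card_pos.mpr ⟨es 0, mem_filter.mpr ⟨hes 0, hies⟩⟩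

lemma exists_qT_ne_zero_of_mem (hcard : ∀ e ∈ E, #e = k) {e : Finset (Fin n)} (he : e ∈ E)
    {i j : Fin n} (hi : i ∈ e) (hj : j ∈ e) (hji : j ≠ i) :
    ∃ f a, qT n k E i f ≠ 0 ∧ f a = j := by
  have hcard' : #(e.erase i) = k - 1 := by rw [card_erase_of_mem hi, hcard e he]
  set f : Fin (k-1) → Fin n := ⇑((e.erase i).orderEmbOfFin hcard')
  have himage : image f univ = e.erase i := image_orderEmbOfFin_univ _ hcard'
  obtain ⟨a, -, ha⟩ := mem_image.mp (himage ▸ mem_erase.mpr ⟨hji, hj⟩)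
  refine ⟨f, a, (lt_of_lt_of_le ?_ (le_add_of_nonneg_left ?_)).ne', ha⟩
  · simp [adjT, (insert_image_univ_eq_iff hcard he hi f).mpr himage, he, Nat.factorial_pos]
  · positivity

/-- Equality in the Collatz–Wielandt bound propagates along edges, so by connectivity it holds
in every row. -/
lemma IsEigenpair.qT_sum_eq (hcard : ∀ e ∈ E, #e = k) (hconn : HConn n E) {y : Fin n → ℝ}
    (hy : ∀ j, 0 < y j) {R : ℝ} (hR : ∀ i, ∑ f, qT n k E i f * ∏ a, y (f a) ≤ R * y i ^ (k-1))
    {ρ : ℂ} {x : Fin n → ℂ} (h : IsEigenpair n k (qT n k E) ρ x) (hρ : ‖ρ‖ = R) (i : Fin n) :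
    ∑ f, qT n k E i f * ∏ a, y (f a) = R * y i ^ (k-1) := by
  obtain ⟨M, hM, hxM, i₀, hi₀⟩ := exists_max_norm_div h.1 hy
  have hrigid := fun {i} => h.sum_eq_of_norm_eq (qT_nonneg E) hy hR hρ hM hxM (i := i)
  refine (hrigid (hconn.forall_of_mem_edge (P := fun j => ‖x j‖ = M * y j) hi₀
    (fun e he i hi hxi j hj => ?_) i)).1
  by_cases hji : j = i
  · exact hji ▸ hxi
  obtain ⟨f, a, hf, rfl⟩ := exists_qT_ne_zero_of_mem hcard he hi hj hji
  exact (hrigid hxi).2 f hf a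

lemma specRad_qT_eq_iff (hn : 0 < n) (hcard : ∀ e ∈ E, #e = k) (hconn : HConn n E)
    {y : Fin n → ℝ} (hy : ∀ j, 0 < y j) {R : ℝ} (hR0 : 0 < R)
    (hR : ∀ i, ∑ f, qT n k E i f * ∏ a, y (f a) ≤ R * y i ^ (k-1)) :
    specRad n k (qT n k E) = R ↔ ∀ i, ∑ f, qT n k E i f * ∏ a, y (f a) = R * y i ^ (k-1) := by
  refine ⟨fun hspec => ?_, specRad_eq_of_sum_eq hn (qT_nonneg E) hy hR0.le⟩
  obtain ⟨ρ, x, hx, hρ⟩ := exists_isEigenpair_norm_eq_specRad (qT_nonneg E) (hspec ▸ hR0)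
  exact hx.qT_sum_eq hcard hconn hy hR (hρ.trans hspec)

end Hypergraph

section TestVector

lemma card_add_sum_le {ι : Type*} {s : Finset ι} {g : ι → ℝ} {D t : ℝ} (hs : (#s : ℝ) ≤ D)
    (hg : ∀ e ∈ s, g e ≤ t) (ht : 0 ≤ t) : #s + ∑ e ∈ s, g e ≤ D * (1 + t) := by
  have := sum_le_sum hg
  rw [sum_const, nsmul_eq_mul] at this
  nlinarith

lemma card_add_sum_eq_iff {ι : Type*} {s : Finset ι} {g : ι → ℝ} {D t : ℝ} (hs : (#s : ℝ) ≤ D)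
    (hg : ∀ e ∈ s, g e ≤ t) (ht : 0 ≤ t) :
    #s + ∑ e ∈ s, g e = D * (1 + t) ↔ #s = D ∧ ∀ e ∈ s, g e = t := by
  rw [← sum_eq_sum_iff_of_le hg, sum_const, nsmul_eq_mul]
  have := sum_le_sum hg
  rw [sum_const, nsmul_eq_mul] at this
  constructor
  · intro h
    have hD : (#s : ℝ) = D := by nlinarith
    exact ⟨hD, by subst hD; linarith⟩
  · rintro ⟨rfl, h⟩
    rw [h]; ring

variable {n k : ℕ} {E : Finset (Finset (Fin n))}

lemma sum_qT_update_self (hcard : ∀ e ∈ E, #e = k) (w : Fin n) (t : ℝ) :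
    ∑ f, qT n k E w f * ∏ a, update (1 : Fin n → ℝ) w t (f a) =
      hDeg n E w * t ^ (k-1) + hDeg n E w := by
  rw [sum_qT_mul_prod hcard, update_self]
  congr 1
  rw [sum_congr rfl fun e _ => prod_eq_one fun j hj => by rw [update_of_ne (ne_of_mem_erase hj),
    Pi.one_apply], sum_const, nsmul_one]
  rfl

lemma sum_qT_update_of_ne (hcard : ∀ e ∈ E, #e = k) {i w : Fin n} (hi : i ≠ w) (t : ℝ) :
    ∑ f, qT n k E i f * ∏ a, update (1 : Fin n → ℝ) w t (f a) =
      hDeg n E i + ∑ e ∈ E with i ∈ e, if w ∈ e then t else 1 := by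
  rw [sum_qT_mul_prod hcard, update_of_ne hi, Pi.one_apply, one_pow, mul_one]
  congr 1
  refine sum_congr rfl fun e _ => ?_
  by_cases hw : w ∈ e
  · rw [prod_update_of_mem (mem_erase.mpr ⟨hi.symm, hw⟩), if_pos hw]
    simp
  · rw [prod_update_of_notMem (fun h => hw (mem_of_mem_erase h)), if_neg hw]
    simp

variable {w : Fin n} {D : ℕ} {t : ℝ}

lemma sum_qT_update_le (hcard : ∀ e ∈ E, #e = k) (ht : 1 ≤ t) (hD : ∀ i ≠ w, hDeg n E i ≤ D)
    (hw : hDeg n E w * t ^ (k-1) + hDeg n E w = D * (1 + t) * t ^ (k-1)) (i : Fin n) :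
    ∑ f, qT n k E i f * ∏ a, update (1 : Fin n → ℝ) w t (f a) ≤
      D * (1 + t) * update (1 : Fin n → ℝ) w t i ^ (k-1) := by
  by_cases hi : i = w
  · subst hi
    rw [sum_qT_update_self hcard, update_self, hw]
  rw [sum_qT_update_of_ne hcard hi, update_of_ne hi, Pi.one_apply, one_pow, mul_one]
  exact card_add_sum_le (by exact_mod_cast hD i hi) (fun e _ => by split_ifs <;> linarith)
    (by linarith)

lemma sum_qT_update_eq_iff (hcard : ∀ e ∈ E, #e = k) (ht : 1 ≤ t)
    (hD : ∀ i ≠ w, hDeg n E i ≤ D)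
    (hw : hDeg n E w * t ^ (k-1) + hDeg n E w = D * (1 + t) * t ^ (k-1)) :
    (∀ i, ∑ f, qT n k E i f * ∏ a, update (1 : Fin n → ℝ) w t (f a) =
      D * (1 + t) * update (1 : Fin n → ℝ) w t i ^ (k-1)) ↔
    ∀ i ≠ w, hDeg n E i = D ∧ ∀ e ∈ E, i ∈ e → w ∈ e ∨ t = 1 := by
  have hrow : ∀ i ≠ w, ∑ f, qT n k E i f * ∏ a, update (1 : Fin n → ℝ) w t (f a) =
      D * (1 + t) * update (1 : Fin n → ℝ) w t i ^ (k-1) ↔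
      hDeg n E i = D ∧ ∀ e ∈ E, i ∈ e → w ∈ e ∨ t = 1 := by
    intro i hi
    rw [sum_qT_update_of_ne hcard hi, update_of_ne hi, Pi.one_apply, one_pow, mul_one]
    refine (card_add_sum_eq_iff (by exact_mod_cast hD i hi)
      (fun e _ => by split_ifs <;> linarith) (by linarith)).trans ?_
    refine and_congr Nat.cast_inj ⟨fun h e he hie => ?_, fun h e he => ?_⟩
    · have := h e (mem_filter.mpr ⟨he, hie⟩)
      split_ifs at this with hwe
      · exact .inl hwe
      · exact .inr this.symm
    · obtain ⟨he, hie⟩ := mem_filter.mp he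
      rcases h e he hie with hwe | rfl
      · rw [if_pos hwe]
      · split_ifs <;> rfl
  refine ⟨fun h i hi => (hrow i hi).mp (h i), fun h i => ?_⟩
  by_cases hi : i = w
  · subst hi
    rw [sum_qT_update_self hcard, update_self, hw]
  exact (hrow i hi).mpr (h i hi)

end TestVector

def IsDStar (k d₁ d₂ : ℕ) (t : ℝ) : Prop :=
  (d₁ = d₂ → t = 1) ∧
    (d₂ < d₁ → ((d₂ : ℝ) * t ^ k + ((d₂ : ℝ) - d₁) * t ^ (k-1) - d₁ = 0) ∧
      ((d₁ : ℝ) / d₂) ^ ((1 : ℝ) / k) < t ∧ t < (d₁ : ℝ) / d₂)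

namespace IsDStar

variable {k d₁ d₂ : ℕ} {t : ℝ}

lemma one_le (h : IsDStar k d₁ d₂ t) (hd₂ : 0 < d₂) (h21 : d₂ ≤ d₁) : 1 ≤ t := by
  rcases h21.lt_or_eq with hlt | heq
  · have hratio : 1 ≤ (d₁ : ℝ) / d₂ :=
      (one_le_div (by exact_mod_cast hd₂)).mpr (by exact_mod_cast h21)
    exact ((Real.one_le_rpow hratio (by positivity)).trans_lt (h.2 hlt).2.1).le
  · exact (h.1 heq.symm).ge

lemma add_eq (h : IsDStar k d₁ d₂ t) (hk : 1 ≤ k) (h21 : d₂ ≤ d₁) :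
    (d₁ : ℝ) * t ^ (k-1) + d₁ = d₂ * (1 + t) * t ^ (k-1) := by
  rcases h21.lt_or_eq with hlt | heq
  · have hroot := (h.2 hlt).1
    rw [show k = k - 1 + 1 by omega, pow_succ, Nat.add_sub_cancel] at hroot
    linear_combination -hroot
  · rw [h.1 heq.symm, heq]
    ring

lemma eq_one_iff (h : IsDStar k d₁ d₂ t) (hk : 1 ≤ k) (h21 : d₂ ≤ d₁) : t = 1 ↔ d₁ = d₂ := by
  refine ⟨fun ht => ?_, h.1⟩
  have := h.add_eq hk h21
  rw [ht] at this
  norm_num at this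
  exact_mod_cast (by linarith : (d₁ : ℝ) = d₂)

end IsDStar

lemma regular_or_blowUp_iff {n k : ℕ} (hk : 2 ≤ k) {E : Finset (Finset (Fin n))}
    (hcard : ∀ e ∈ E, #e = k) {v₀ v₁ : Fin n} (hv : v₀ ≠ v₁)
    (hmax : ∀ i, hDeg n E i ≤ hDeg n E v₀) (hsecond : ∀ i ≠ v₀, hDeg n E i ≤ hDeg n E v₁) :
    ((∀ i j : Fin n, hDeg n E i = hDeg n E j) ∨
        ∃ w : Fin n, (∀ e ∈ E, w ∈ e) ∧ ∃ r : ℕ, ∀ i : Fin n, i ≠ w → hDeg n E i = r) ↔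
      ∀ i ≠ v₀, hDeg n E i = hDeg n E v₁ ∧
        ∀ e ∈ E, i ∈ e → v₀ ∈ e ∨ hDeg n E v₀ = hDeg n E v₁ := by
  constructor
  · have hE : ∀ w, (∀ e ∈ E, w ∈ e) → hDeg n E v₀ ≤ hDeg n E w := fun w hw => by
      rw [hDeg, hDeg, filter_true_of_mem hw]
      exact card_filter_le _ _
    rintro (hreg | ⟨w, hw, r, hr⟩) i hi
    · exact ⟨hreg i v₁, fun _ _ _ => .inr (hreg v₀ v₁)⟩
    by_cases hwv : w = v₀
    · subst hwv
      exact ⟨(hr i hi).trans (hr v₁ hv.symm).symm, fun e he _ => .inl (hw e he)⟩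
    have h01 : hDeg n E v₀ = hDeg n E v₁ := by
      have := hE w hw; have := hsecond w hwv; have := hmax v₁; omega
    refine ⟨?_, fun _ _ _ => .inr h01⟩
    by_cases hiw : i = w
    · subst hiw; have := hE i hw; have := hsecond i hi; omega
    · rw [hr i hiw, ← h01, hr v₀ (Ne.symm hwv)]
  · intro h
    by_cases h01 : hDeg n E v₀ = hDeg n E v₁
    · have hreg : ∀ i, hDeg n E i = hDeg n E v₁ := fun i => by
        by_cases hi : i = v₀
        · rw [hi, h01]
        · exact (h i hi).1
      exact .inl fun i j => (hreg i).trans (hreg j).symm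
    refine .inr ⟨v₀, fun e he => ?_, hDeg n E v₁, fun i hi => (h i hi).1⟩
    obtain ⟨j, hj, hjv⟩ : ∃ j ∈ e, j ≠ v₀ := by
      by_contra! hall
      have : #e ≤ 1 := card_le_one.mpr fun a ha b hb => (hall a ha).trans (hall b hb).symm
      have := hcard e he
      omega
    exact ((h j hjv).2 e he hj).resolve_right h01

/-- Let `G` be a connected `k`-uniform hypergraph on `n` vertices with degree sequence
`d₁ ≥ … ≥ d_n` and `d*` as in the previous statement (`d* = 1` when `d₁ = d₂`, and a root of
`h(t) = d₂ t^k + (d₂−d₁)t^{k−1} − d₁` in `((d₁/d₂)^{1/k}, d₁/d₂)` when `d₁ > d₂`). Then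
`μ(G) = d₁ + d₁(1/d*)^{k−1}` if and only if `G` is regular or `G` is the blow-up `H¹` of a
regular `(k−1)`-uniform hypergraph `H` on `n−1` vertices. -/
theorem stmt14 (n k : ℕ) (hk : 2 ≤ k) (hkn : k ≤ n)
    (E : Finset (Finset (Fin n))) (hcard : ∀ e ∈ E, e.card = k)
    (hconn : HConn n E)
    (hsort : ∀ i j : Fin n, i ≤ j → hDeg n E j ≤ hDeg n E i)
    (dstar : ℝ)
    (hstar1 : hDeg n E ⟨0, by omega⟩ = hDeg n E ⟨1, by omega⟩ → dstar = 1)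
    (hstar2 : hDeg n E ⟨1, by omega⟩ < hDeg n E ⟨0, by omega⟩ →
      ((hDeg n E ⟨1, by omega⟩ : ℝ) * dstar ^ k +
          ((hDeg n E ⟨1, by omega⟩ : ℝ) - (hDeg n E ⟨0, by omega⟩ : ℝ)) * dstar ^ (k-1) -
          (hDeg n E ⟨0, by omega⟩ : ℝ) = 0) ∧
        ((hDeg n E ⟨0, by omega⟩ : ℝ) / (hDeg n E ⟨1, by omega⟩ : ℝ)) ^ ((1 : ℝ)/k) < dstar ∧
        dstar < (hDeg n E ⟨0, by omega⟩ : ℝ) / (hDeg n E ⟨1, by omega⟩ : ℝ)) :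
    specRad n k (qT n k E) =
        (hDeg n E ⟨0, by omega⟩ : ℝ) + (hDeg n E ⟨0, by omega⟩ : ℝ) * (1/dstar) ^ (k-1)
      ↔ ((∀ i j : Fin n, hDeg n E i = hDeg n E j) ∨
          ∃ w : Fin n, (∀ e ∈ E, w ∈ e) ∧ ∃ r : ℕ, ∀ i : Fin n, i ≠ w → hDeg n E i = r) := by
  set v₀ : Fin n := ⟨0, by omega⟩
  set v₁ : Fin n := ⟨1, by omega⟩
  have hv : v₀ ≠ v₁ := by simp [v₀, v₁, Fin.ext_iff]
  have hmax : ∀ i, hDeg n E i ≤ hDeg n E v₀ := fun i => hsort _ _ (Fin.le_def.mpr (Nat.zero_le _))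
  have hsecond : ∀ i ≠ v₀, hDeg n E i ≤ hDeg n E v₁ := fun i hi =>
    hsort _ _ (Fin.le_def.mpr (Nat.one_le_iff_ne_zero.mpr fun h => hi (Fin.ext h)))
  have hd₂ : 0 < hDeg n E v₁ := hconn.hDeg_pos (by omega) v₁
  have hdstar : IsDStar k (hDeg n E v₀) (hDeg n E v₁) dstar := ⟨hstar1, hstar2⟩
  have hone := hdstar.one_le hd₂ (hmax v₁)
  have hroot := hdstar.add_eq (by omega) (hmax v₁)
  have hP : (hDeg n E v₀ : ℝ) + hDeg n E v₀ * (1 / dstar) ^ (k-1) =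
      hDeg n E v₁ * (1 + dstar) := by
    have : dstar ^ (k-1) ≠ 0 := by positivity
    rw [one_div, inv_pow]
    field_simp
    linear_combination hroot
  have hy : ∀ j, 0 < update (1 : Fin n → ℝ) v₀ dstar j := fun j => by
    rcases eq_or_ne j v₀ with rfl | hj
    · rw [update_self]; linarith
    · rw [update_of_ne hj]; exact one_pos
  rw [hP, specRad_qT_eq_iff (by omega) hcard hconn hy (by positivity)
    (sum_qT_update_le hcard hone hsecond hroot), sum_qT_update_eq_iff hcard hone hsecond hroot,
    hdstar.eq_one_iff (by omega) (hmax v₁)]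
  exact (regular_or_blowUp_iff hk hcard hv hmax hsecond).symm
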